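/- arXiv:1002.2209 — 2 statements merged into one kernel-verified Lean document; each statement's English description precedes it below -/
import Mathlib

section
/- Let p be a prime, and let Q and Q' be quadratic averages on 𝔽_p^n with bases (V,q) and (V',q') respectively. Suppose that the rank of q − q', considered as a quadratic form on V ∩ V', is r. Then |⟨Q,Q'⟩| ≤ p^{−r/2}, where ⟨Q,Q'⟩ = 𝔼_x Q(x)·conj(Q'(x)). -/
open scoped BigOperators

instance instNeZeroOfFactPrime (p : ℕ) [hp : Fact p.Prime] : NeZero p :=
  ⟨hp.out.ne_zero⟩

/-- The vector space `𝔽_p^n`. -/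
abbrev Vec (p n : ℕ) := Fin n → ZMod p

/-- `ω^t` where `ω = e^{2πi/p}`. -/
noncomputable def omg (p : ℕ) (t : ZMod p) : ℂ :=
  Complex.exp (2 * Real.pi * Complex.I * (t.val : ℂ) / p)

/-- Average of a complex-valued function over a finite type. -/
noncomputable def avgC {α : Type*} [Fintype α] (f : α → ℂ) : ℂ :=
  (∑ x, f x) / (Fintype.card α : ℂ)

/-- Average of a real-valued function over a finite type. -/
noncomputable def avgR {α : Type*} [Fintype α] (f : α → ℝ) : ℝ :=
  (∑ x, f x) / (Fintype.card α : ℝ)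

/-- The Gowers `U²` norm. -/
noncomputable def U2 {p n : ℕ} [NeZero p] (f : Vec p n → ℂ) : ℝ :=
  ‖avgC (fun t : Vec p n × Vec p n × Vec p n =>
    f t.1 * star (f (t.1 + t.2.1)) * star (f (t.1 + t.2.2)) *
      f (t.1 + t.2.1 + t.2.2))‖ ^ ((1 : ℝ) / 4)

/-- The Gowers `U³` norm. -/
noncomputable def U3 {p n : ℕ} [NeZero p] (f : Vec p n → ℂ) : ℝ :=
  ‖avgC (fun t : Vec p n × Vec p n × Vec p n × Vec p n =>
    f t.1 * star (f (t.1 + t.2.1)) * star (f (t.1 + t.2.2.1)) *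
      f (t.1 + t.2.1 + t.2.2.1) * star (f (t.1 + t.2.2.2)) *
      f (t.1 + t.2.1 + t.2.2.2) * f (t.1 + t.2.2.1 + t.2.2.2) *
      star (f (t.1 + t.2.1 + t.2.2.1 + t.2.2.2)))‖ ^ ((1 : ℝ) / 8)

/-- `L¹` norm (with respect to the uniform probability measure). -/
noncomputable def L1 {p n : ℕ} [NeZero p] (f : Vec p n → ℂ) : ℝ :=
  avgR (fun x => ‖f x‖)

/-- `L²` norm (with respect to the uniform probability measure). -/
noncomputable def L2 {p n : ℕ} [NeZero p] (f : Vec p n → ℂ) : ℝ :=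
  Real.sqrt (avgR (fun x => ‖f x‖ ^ 2))

/-- `L∞` norm. -/
noncomputable def Linf {p n : ℕ} [NeZero p] (f : Vec p n → ℂ) : ℝ :=
  ⨆ x, ‖f x‖

/-- Normalized inner product `⟨f,g⟩ = 𝔼_x f(x) conj (g x)`. -/
noncomputable def inprod {p n : ℕ} [NeZero p] (f g : Vec p n → ℂ) : ℂ :=
  avgC (fun x => f x * star (g x))

/-- The dual of the `U²` norm. -/
noncomputable def U2dual {p n : ℕ} [NeZero p] (g : Vec p n → ℂ) : ℝ :=
  sSup {r : ℝ | ∃ f : Vec p n → ℂ, U2 f ≤ 1 ∧ r = ‖inprod f g‖}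

/-- The elements of a submodule of `𝔽_p^n` as a `Finset`. -/
noncomputable def subFinset {p n : ℕ} [NeZero p] (V : Submodule (ZMod p) (Vec p n)) :
    Finset (Vec p n) :=
  letI := Classical.decPred (fun v => v ∈ (V : Set (Vec p n)))
  Finset.univ.filter (fun v => v ∈ (V : Set (Vec p n)))

/-- Convolution `f * μ_V`, i.e. the average of `f` over the coset `x + V`. -/
noncomputable def convMu {p n : ℕ} [NeZero p] (f : Vec p n → ℂ)
    (V : Submodule (ZMod p) (Vec p n)) (x : Vec p n) : ℂ :=
  (∑ v ∈ subFinset V, f (x + v)) / ((subFinset V).card : ℂ)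

/-- The associated symmetric form `β(u,v) = q(u+v) - q(u) - q(v)`. -/
def qbeta {p n : ℕ} (q : Vec p n → ZMod p) (u v : Vec p n) : ZMod p :=
  q (u + v) - q u - q v

/-- `q` is a quadratic form on the subspace `V`: `q 0 = 0` and the associated
form `β` is (bi-)additive on `V`. -/
def IsQuadFormOn {p n : ℕ} (V : Submodule (ZMod p) (Vec p n))
    (q : Vec p n → ZMod p) : Prop :=
  q 0 = 0 ∧ ∀ u ∈ V, ∀ v ∈ V, ∀ w ∈ V, qbeta q u (v + w) = qbeta q u v + qbeta q u w

/-- The radical `{v ∈ V : β(u,v) = 0 for all u ∈ V}` of the form associated to `q`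
(as the span of that set, which equals the set itself when `q` is quadratic). -/
noncomputable def qRadical {p n : ℕ} (V : Submodule (ZMod p) (Vec p n))
    (q : Vec p n → ZMod p) : Submodule (ZMod p) (Vec p n) :=
  Submodule.span (ZMod p) {v | v ∈ V ∧ ∀ u ∈ V, qbeta q u v = 0}

/-- The rank of the quadratic form `q` on `V`: the codimension in `V` of the radical. -/
noncomputable def qRank {p n : ℕ} (V : Submodule (ZMod p) (Vec p n))
    (q : Vec p n → ZMod p) : ℕ :=
  Module.finrank (ZMod p) V - Module.finrank (ZMod p) (qRadical V q)

/-- `Q` is a quadratic average with base `(V, q)`: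
`Q(x) = 𝔼_{y ∈ x+V} ω^{q(x-y) + φ_y(x-y)}` with each `φ_y` linear on `V`.
(Parametrizing `y = x - v` with `v ∈ V`, this reads `Q(x) = 𝔼_{v ∈ V} ω^{q(v) + φ_{x-v}(v)}`.) -/
def IsQuadAvgWith {p n : ℕ} [NeZero p] (V : Submodule (ZMod p) (Vec p n))
    (q : Vec p n → ZMod p) (Q : Vec p n → ℂ) : Prop :=
  IsQuadFormOn V q ∧
  ∃ φ : Vec p n → Vec p n → ZMod p,
    (∀ y, ∀ u ∈ V, ∀ v ∈ V, φ y (u + v) = φ y u + φ y v) ∧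
    ∀ x, Q x = (∑ v ∈ subFinset V, omg p (q v + φ (x - v) v)) / ((subFinset V).card : ℂ)

/-- The radical of a bilinear form `β` restricted to the subspace `W`. -/
noncomputable def bRadical {p n : ℕ} (W : Submodule (ZMod p) (Vec p n))
    (β : Vec p n →ₗ[ZMod p] Vec p n →ₗ[ZMod p] ZMod p) :
    Submodule (ZMod p) (Vec p n) :=
  Submodule.span (ZMod p) {y | y ∈ W ∧ ∀ x ∈ W, β x y = 0}

/-- The rank of the bilinear form `β` restricted to the subspace `W`. -/
noncomputable def bRankOn {p n : ℕ} (W : Submodule (ZMod p) (Vec p n))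
    (β : Vec p n →ₗ[ZMod p] Vec p n →ₗ[ZMod p] ZMod p) : ℕ :=
  Module.finrank (ZMod p) W - Module.finrank (ZMod p) (bRadical W β)

/-!
Expanding both averages, `⟨Q, Q'⟩` becomes an average over triples `(x, y, y')` with
`x ∈ (y + V) ∩ (y' + V')`. For fixed `y, y'` the admissible `x` form a coset `x₀ + (V ∩ V')`
(or nothing), and on it the phase is a constant plus `(q - q')(w)` plus a term additive in `w`.
Such a Gauss sum over `W = V ∩ V'` has modulus at most `|W| p^{-r/2}`: squaring it and
substituting `w = w' + h` leaves `∑_h ω^{(q - q')(h) + L(h)} ∑_{w'} ω^{β(w', h)}`, and the inner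
sum vanishes unless `h` lies in the radical. Summing the bound over all `(y, y')` counts every
triple once, which gives exactly `p^{-r/2}`.
-/

open Finset ZMod

lemma omg_eq_stdAddChar (p : ℕ) [NeZero p] (t : ZMod p) : omg p t = stdAddChar t := by
  rw [stdAddChar_apply, toCircle_apply]
  rfl

lemma star_stdAddChar {p : ℕ} [NeZero p] (t : ZMod p) :
    star (stdAddChar t : ℂ) = stdAddChar (-t) := by
  rw [AddChar.map_neg_eq_conj]
  rfl

lemma stdAddChar_ne_one {p : ℕ} [NeZero p] {t : ZMod p} (ht : t ≠ 0) :
    (stdAddChar t : ℂ) ≠ 1 := by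
  rwa [← (stdAddChar (N := p)).map_zero_eq_one, injective_stdAddChar.ne_iff]

section Subspace

variable {p n : ℕ} [NeZero p]

lemma mem_subFinset {V : Submodule (ZMod p) (Vec p n)} {v : Vec p n} :
    v ∈ subFinset V ↔ v ∈ V := by
  classical
  simp [subFinset]

lemma sum_subFinset_add_right {M : Type*} [AddCommMonoid M] {W : Submodule (ZMod p) (Vec p n)}
    {w₀ : Vec p n} (hw₀ : w₀ ∈ W) (f : Vec p n → M) :
    ∑ w ∈ subFinset W, f (w + w₀) = ∑ w ∈ subFinset W, f w :=
  sum_nbij' (· + w₀) (· - w₀)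
    (fun _ hw => mem_subFinset.2 (W.add_mem (mem_subFinset.1 hw) hw₀))
    (fun _ hw => mem_subFinset.2 (W.sub_mem (mem_subFinset.1 hw) hw₀))
    (fun _ _ => add_sub_cancel_right _ _) (fun _ _ => sub_add_cancel _ _) (fun _ _ => rfl)

lemma sum_stdAddChar_eq_zero {W : Submodule (ZMod p) (Vec p n)} {χ : Vec p n → ZMod p}
    (hχ : ∀ u ∈ W, ∀ v ∈ W, χ (u + v) = χ u + χ v) {w₀ : Vec p n} (hw₀ : w₀ ∈ W)
    (hχw₀ : χ w₀ ≠ 0) :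
    ∑ w ∈ subFinset W, (stdAddChar (χ w) : ℂ) = 0 := by
  have hinv : stdAddChar (χ w₀) * ∑ w ∈ subFinset W, (stdAddChar (χ w) : ℂ) =
      ∑ w ∈ subFinset W, (stdAddChar (χ w) : ℂ) := by
    conv_rhs => rw [← sum_subFinset_add_right hw₀]
    rw [mul_sum]
    refine sum_congr rfl fun w hw => ?_
    rw [hχ w (mem_subFinset.1 hw) w₀ hw₀, AddChar.map_add_eq_mul, mul_comm]
  by_contra hne
  exact stdAddChar_ne_one hχw₀ ((mul_eq_right₀ hne).1 hinv)

end Subspace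

lemma card_subFinset {p n : ℕ} [Fact p.Prime] (V : Submodule (ZMod p) (Vec p n)) :
    #(subFinset V) = p ^ Module.finrank (ZMod p) V := by
  classical
  calc #(subFinset V) = Fintype.card V := by
        rw [← Fintype.card_coe]
        exact Fintype.card_congr (Equiv.subtypeEquivRight fun _ => mem_subFinset)
    _ = p ^ Module.finrank (ZMod p) V := by
        rw [Module.card_eq_pow_finrank (K := ZMod p) (V := V), ZMod.card]

lemma qbeta_comm {p n : ℕ} (q : Vec p n → ZMod p) (u v : Vec p n) :
    qbeta q u v = qbeta q v u := by
  rw [qbeta, qbeta, add_comm u v]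
  ring

lemma IsQuadFormOn.qbeta_add_left {p n : ℕ} {W : Submodule (ZMod p) (Vec p n)}
    {q : Vec p n → ZMod p} (hq : IsQuadFormOn W q) {h : Vec p n} (hh : h ∈ W) :
    ∀ u ∈ W, ∀ v ∈ W, qbeta q (u + v) h = qbeta q u h + qbeta q v h := by
  intro u hu v hv
  simp only [qbeta_comm q _ h, hq.2 h hh u hu v hv]

lemma IsQuadFormOn.mem_qRadical_iff {p n : ℕ} {W : Submodule (ZMod p) (Vec p n)}
    {q : Vec p n → ZMod p} (hq : IsQuadFormOn W q) {v : Vec p n} :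
    v ∈ qRadical W q ↔ v ∈ W ∧ ∀ u ∈ W, qbeta q u v = 0 := by
  -- Over `ZMod p` an additive subgroup is already a submodule, so the spanning set is its own span.
  have qbeta_zero : ∀ u, qbeta q u 0 = 0 := fun u => by simp [qbeta, hq.1]
  let R : AddSubgroup (Vec p n) :=
    { carrier := {v | v ∈ W ∧ ∀ u ∈ W, qbeta q u v = 0}
      zero_mem' := ⟨W.zero_mem, fun u _ => qbeta_zero u⟩
      add_mem' := fun {a b} ⟨ha, ha'⟩ ⟨hb, hb'⟩ =>
        ⟨W.add_mem ha hb, fun u hu => by rw [hq.2 u hu a ha b hb, ha' u hu, hb' u hu, add_zero]⟩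
      neg_mem' := fun {a} ⟨ha, ha'⟩ =>
        ⟨W.neg_mem ha, fun u hu => by
          have := hq.2 u hu a ha (-a) (W.neg_mem ha)
          rwa [add_neg_cancel, qbeta_zero, ha' u hu, zero_add, eq_comm] at this⟩ }
  have hR : qRadical W q = AddSubgroup.toZModSubmodule p R :=
    Submodule.span_eq (AddSubgroup.toZModSubmodule p R)
  rw [hR]
  rfl

lemma IsQuadFormOn.qRadical_le {p n : ℕ} {W : Submodule (ZMod p) (Vec p n)}
    {q : Vec p n → ZMod p} (hq : IsQuadFormOn W q) : qRadical W q ≤ W :=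
  fun _ hv => (hq.mem_qRadical_iff.1 hv).1

section GaussSum

variable {p n : ℕ} [NeZero p] {W : Submodule (ZMod p) (Vec p n)} {q : Vec p n → ZMod p}

open Classical in
lemma IsQuadFormOn.sum_stdAddChar_qbeta (hq : IsQuadFormOn W q) {h : Vec p n} (hh : h ∈ W) :
    ∑ u ∈ subFinset W, (stdAddChar (qbeta q u h) : ℂ) =
      if h ∈ qRadical W q then (#(subFinset W) : ℂ) else 0 := by
  split_ifs with hrad
  · have hzero := (hq.mem_qRadical_iff.1 hrad).2
    rw [sum_congr rfl fun u hu => by rw [hzero u (mem_subFinset.1 hu), AddChar.map_zero_eq_one]]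
    simp
  · obtain ⟨u, hu, hne⟩ : ∃ u ∈ W, qbeta q u h ≠ 0 := by
      by_contra! hall
      exact hrad (hq.mem_qRadical_iff.2 ⟨hh, hall⟩)
    exact sum_stdAddChar_eq_zero (hq.qbeta_add_left hh) hu hne

lemma sum_stdAddChar_mul_star_self {L : Vec p n → ZMod p}
    (hL : ∀ u ∈ W, ∀ v ∈ W, L (u + v) = L u + L v) :
    (∑ w ∈ subFinset W, (stdAddChar (q w + L w) : ℂ)) *
        star (∑ w ∈ subFinset W, (stdAddChar (q w + L w) : ℂ)) =
      ∑ h ∈ subFinset W, stdAddChar (q h + L h) *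
        ∑ u ∈ subFinset W, (stdAddChar (qbeta q u h) : ℂ) := by
  have shift : ∀ u ∈ W, ∑ w ∈ subFinset W,
      (stdAddChar (q w + L w) : ℂ) * star (stdAddChar (q u + L u) : ℂ) =
        ∑ h ∈ subFinset W, stdAddChar (q h + L h) * stdAddChar (qbeta q u h) := by
    intro u hu
    rw [← sum_subFinset_add_right hu]
    refine sum_congr rfl fun h hh => ?_
    rw [star_stdAddChar, ← AddChar.map_add_eq_mul, ← AddChar.map_add_eq_mul,
      hL h (mem_subFinset.1 hh) u hu, qbeta, add_comm u h]
    ring_nf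
  rw [star_sum, sum_mul_sum, sum_comm, sum_congr rfl fun u hu => shift u (mem_subFinset.1 hu),
    sum_comm]
  simp only [mul_sum]

lemma IsQuadFormOn.sq_norm_sum_stdAddChar_le (hq : IsQuadFormOn W q) {L : Vec p n → ZMod p}
    (hL : ∀ u ∈ W, ∀ v ∈ W, L (u + v) = L u + L v) :
    ‖∑ w ∈ subFinset W, (stdAddChar (q w + L w) : ℂ)‖ ^ 2 ≤
      #(subFinset W) * #(subFinset (qRadical W q)) := by
  classical
  have hrad : (subFinset W).filter (· ∈ qRadical W q) = subFinset (qRadical W q) := by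
    ext v
    simpa [mem_subFinset] using fun hv => hq.qRadical_le hv
  calc ‖∑ w ∈ subFinset W, (stdAddChar (q w + L w) : ℂ)‖ ^ 2
      = ‖(∑ w ∈ subFinset W, (stdAddChar (q w + L w) : ℂ)) *
          star (∑ w ∈ subFinset W, (stdAddChar (q w + L w) : ℂ))‖ := by
        rw [norm_mul, norm_star, sq]
    _ ≤ ∑ h ∈ subFinset W, ‖(stdAddChar (q h + L h) : ℂ) *
          ∑ u ∈ subFinset W, (stdAddChar (qbeta q u h) : ℂ)‖ := by
        rw [sum_stdAddChar_mul_star_self hL]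
        exact norm_sum_le _ _
    _ = ∑ h ∈ subFinset W, if h ∈ qRadical W q then (#(subFinset W) : ℝ) else 0 := by
        refine sum_congr rfl fun h hh => ?_
        rw [norm_mul, AddChar.norm_apply, one_mul, hq.sum_stdAddChar_qbeta (mem_subFinset.1 hh)]
        split_ifs <;> simp
    _ = #(subFinset W) * #(subFinset (qRadical W q)) := by
        rw [sum_ite, sum_const_zero, add_zero, sum_const, nsmul_eq_mul, hrad, mul_comm]

end GaussSum

lemma IsQuadFormOn.norm_sum_stdAddChar_le {p n : ℕ} [Fact p.Prime]
    {W : Submodule (ZMod p) (Vec p n)} {q : Vec p n → ZMod p} (hq : IsQuadFormOn W q)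
    {L : Vec p n → ZMod p} (hL : ∀ u ∈ W, ∀ v ∈ W, L (u + v) = L u + L v) :
    ‖∑ w ∈ subFinset W, (stdAddChar (q w + L w) : ℂ)‖ ≤
      #(subFinset W) * (p : ℝ) ^ (-(qRank W q : ℝ) / 2) := by
  have hp : (0 : ℝ) < p := Nat.cast_pos.2 (Fact.out : p.Prime).pos
  have hle := Submodule.finrank_mono hq.qRadical_le
  have hsq : ((p : ℝ) ^ (-(qRank W q : ℝ) / 2)) ^ 2 = ((p : ℝ) ^ qRank W q)⁻¹ := by
    rw [← Real.rpow_natCast, ← Real.rpow_mul hp.le, ← Real.rpow_natCast, ← Real.rpow_neg hp.le]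
    ring_nf
  have hsplit : (p : ℝ) ^ Module.finrank (ZMod p) W =
      p ^ qRank W q * p ^ Module.finrank (ZMod p) (qRadical W q) := by
    rw [← pow_add, qRank, Nat.sub_add_cancel hle]
  refine (pow_le_pow_iff_left₀ (norm_nonneg _) (by positivity) two_ne_zero).1 ?_
  calc _ ≤ (#(subFinset W) * #(subFinset (qRadical W q)) : ℝ) := hq.sq_norm_sum_stdAddChar_le hL
    _ = _ := by
      rw [mul_pow, hsq, card_subFinset, card_subFinset]
      push_cast
      rw [sq, hsplit]
      field_simp

section Reindex

variable {G M : Type*} [AddCommGroup G] [Fintype G] [DecidableEq G] [AddCommMonoid M]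

lemma sum_sum_sum_sub_eq (s t : Finset G) (f : G → G → G → M) :
    ∑ x, ∑ v ∈ s, ∑ v' ∈ t, f x (x - v) (x - v') =
      ∑ y, ∑ y', ∑ x with x - y ∈ s ∧ x - y' ∈ t, f x y y' := by
  have sub_left : ∀ (u : Finset G) (x : G) (g : G → M),
      ∑ v ∈ u, g (x - v) = ∑ y, if x - y ∈ u then g y else 0 := fun u x g => by
    rw [← sum_filter]
    exact sum_nbij' (x - ·) (x - ·) (by simp) (by simp) (by simp) (by simp) (by simp)
  calc ∑ x, ∑ v ∈ s, ∑ v' ∈ t, f x (x - v) (x - v')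
      = ∑ x, ∑ y, ∑ y', if x - y ∈ s ∧ x - y' ∈ t then f x y y' else 0 := by
        refine sum_congr rfl fun x _ => ?_
        rw [sub_left s x fun y => ∑ v' ∈ t, f x y (x - v')]
        refine sum_congr rfl fun y _ => ?_
        rw [sub_left t x]
        split_ifs with hy <;> simp [hy]
    _ = ∑ y, ∑ y', ∑ x with x - y ∈ s ∧ x - y' ∈ t, f x y y' := by
        rw [sum_comm]
        simp only [sum_filter]
        exact sum_congr rfl fun y _ => sum_comm

lemma card_filter_sub_mem_sum (s t : Finset G) :
    ∑ y, ∑ y', #{x | x - y ∈ s ∧ x - y' ∈ t} = Fintype.card G * #s * #t := by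
  simp only [card_eq_sum_ones]
  rw [← sum_sum_sum_sub_eq s t fun _ _ _ => 1]
  simp [mul_assoc]

end Reindex

lemma qbeta_sub {p n : ℕ} (q q' : Vec p n → ZMod p) (u v : Vec p n) :
    qbeta (fun x => q x - q' x) u v = qbeta q u v - qbeta q' u v := by
  simp only [qbeta]
  ring

lemma IsQuadFormOn.mono {p n : ℕ} {V W : Submodule (ZMod p) (Vec p n)} {q : Vec p n → ZMod p}
    (hq : IsQuadFormOn V q) (hWV : W ≤ V) : IsQuadFormOn W q :=
  ⟨hq.1, fun u hu v hv w hw => hq.2 u (hWV hu) v (hWV hv) w (hWV hw)⟩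

lemma IsQuadFormOn.sub {p n : ℕ} {W : Submodule (ZMod p) (Vec p n)} {q q' : Vec p n → ZMod p}
    (hq : IsQuadFormOn W q) (hq' : IsQuadFormOn W q') :
    IsQuadFormOn W (fun x => q x - q' x) := by
  refine ⟨by simp [hq.1, hq'.1], fun u hu v hv w hw => ?_⟩
  simp only [qbeta_sub, hq.2 u hu v hv w hw, hq'.2 u hu v hv w hw]
  ring

section Coset

variable {p n : ℕ} [NeZero p] {V V' : Submodule (ZMod p) (Vec p n)}

lemma sum_filter_sub_mem_eq {M : Type*} [AddCommMonoid M] {x₀ y y' : Vec p n}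
    (hy : x₀ - y ∈ V) (hy' : x₀ - y' ∈ V') (g : Vec p n → M) :
    ∑ x with x - y ∈ subFinset V ∧ x - y' ∈ subFinset V', g x =
      ∑ w ∈ subFinset (V ⊓ V'), g (x₀ + w) := by
  refine sum_nbij' (· - x₀) (x₀ + ·) (fun x hx => ?_) (fun w hw => ?_) (fun _ _ => by abel)
    (fun _ _ => by abel) (fun _ _ => by rw [add_sub_cancel])
  · simp only [mem_filter, mem_univ, true_and, mem_subFinset] at hx ⊢
    refine Submodule.mem_inf.2 ⟨?_, ?_⟩
    · simpa using V.sub_mem hx.1 hy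
    · simpa using V'.sub_mem hx.2 hy'
  · simp only [mem_filter, mem_univ, true_and, mem_subFinset] at hw ⊢
    rw [add_sub_right_comm, add_sub_right_comm]
    exact ⟨V.add_mem hy (Submodule.mem_inf.1 hw).1, V'.add_mem hy' (Submodule.mem_inf.1 hw).2⟩

end Coset

lemma norm_sum_filter_sub_mem_le {p n : ℕ} [Fact p.Prime] {V V' : Submodule (ZMod p) (Vec p n)}
    {q q' ℓ ℓ' : Vec p n → ZMod p} (hq : IsQuadFormOn V q) (hq' : IsQuadFormOn V' q')
    (hℓ : ∀ u ∈ V, ∀ v ∈ V, ℓ (u + v) = ℓ u + ℓ v)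
    (hℓ' : ∀ u ∈ V', ∀ v ∈ V', ℓ' (u + v) = ℓ' u + ℓ' v) (y y' : Vec p n) :
    ‖∑ x with x - y ∈ subFinset V ∧ x - y' ∈ subFinset V',
        (stdAddChar (q (x - y) + ℓ (x - y) - (q' (x - y') + ℓ' (x - y'))) : ℂ)‖ ≤
      #{x | x - y ∈ subFinset V ∧ x - y' ∈ subFinset V'} *
        (p : ℝ) ^ (-(qRank (V ⊓ V') (fun x => q x - q' x) : ℝ) / 2) := by
  set E : Vec p n → ZMod p := fun x => q (x - y) + ℓ (x - y) - (q' (x - y') + ℓ' (x - y'))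
  change ‖∑ x with x - y ∈ subFinset V ∧ x - y' ∈ subFinset V', (stdAddChar (E x) : ℂ)‖ ≤ _
  rcases (univ.filter fun x => x - y ∈ subFinset V ∧ x - y' ∈ subFinset V').eq_empty_or_nonempty
    with hA | ⟨x₀, hx₀⟩
  · simp [hA]
  obtain ⟨hy, hy'⟩ : x₀ - y ∈ V ∧ x₀ - y' ∈ V' := by simpa [mem_subFinset] using hx₀
  set L : Vec p n → ZMod p := fun w => qbeta q (x₀ - y) w + ℓ w - (qbeta q' (x₀ - y') w + ℓ' w)
  have hL : ∀ u ∈ V ⊓ V', ∀ v ∈ V ⊓ V', L (u + v) = L u + L v := fun u hu v hv => by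
    simp only [L, hq.2 _ hy u hu.1 v hv.1, hq'.2 _ hy' u hu.2 v hv.2, hℓ u hu.1 v hv.1,
      hℓ' u hu.2 v hv.2]
    ring
  have hE : ∀ w ∈ subFinset (V ⊓ V'), E (x₀ + w) = E x₀ + (q w - q' w + L w) := fun w hw => by
    have hw := Submodule.mem_inf.1 (mem_subFinset.1 hw)
    simp only [E, L, add_sub_right_comm x₀ w, hℓ _ hy w hw.1, hℓ' _ hy' w hw.2, qbeta]
    ring
  rw [sum_filter_sub_mem_eq hy hy', card_eq_sum_ones, sum_filter_sub_mem_eq hy hy',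
    ← card_eq_sum_ones, sum_congr rfl fun w hw => by rw [hE w hw, AddChar.map_add_eq_mul],
    ← mul_sum, norm_mul, AddChar.norm_apply, one_mul]
  exact ((hq.mono inf_le_left).sub (hq'.mono inf_le_right)).norm_sum_stdAddChar_le hL

lemma inprod_eq_sum_filter_sub_mem {p n : ℕ} [NeZero p] {V V' : Submodule (ZMod p) (Vec p n)}
    {e e' : Vec p n → Vec p n → ZMod p} {Q Q' : Vec p n → ℂ}
    (hQ : ∀ x, Q x = (∑ v ∈ subFinset V, (stdAddChar (e (x - v) v) : ℂ)) / #(subFinset V))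
    (hQ' : ∀ x, Q' x = (∑ v ∈ subFinset V', (stdAddChar (e' (x - v) v) : ℂ)) / #(subFinset V')) :
    inprod Q Q' = (∑ y, ∑ y', ∑ x with x - y ∈ subFinset V ∧ x - y' ∈ subFinset V',
        (stdAddChar (e y (x - y) - e' y' (x - y')) : ℂ)) /
      (Fintype.card (Vec p n) * #(subFinset V) * #(subFinset V') : ℕ) := by
  have hprod : ∀ x, Q x * star (Q' x) = (∑ v ∈ subFinset V, ∑ v' ∈ subFinset V',
      (stdAddChar (e (x - v) v - e' (x - v') v') : ℂ)) / (#(subFinset V) * #(subFinset V')) := by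
    intro x
    simp only [hQ, hQ', star_div₀, star_natCast, star_sum, div_mul_div_comm, sum_mul_sum,
      star_stdAddChar, ← AddChar.map_add_eq_mul, sub_eq_add_neg]
  rw [← sum_sum_sum_sub_eq, inprod, avgC, sum_congr rfl fun x _ => hprod x, ← sum_div, div_div]
  simp only [sub_sub_cancel]
  push_cast
  ring

/-- Lemma 4.3. If `Q, Q'` are quadratic averages with bases `(V,q)`,
`(V',q')` and the rank of `q - q'` on `V ⊓ V'` is `r`, then `|⟨Q,Q'⟩| ≤ p^{-r/2}`. -/
theorem stmt7 (p : ℕ) [Fact p.Prime] (n : ℕ)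
    (V V' : Submodule (ZMod p) (Vec p n))
    (q q' : Vec p n → ZMod p) (Q Q' : Vec p n → ℂ) (r : ℕ)
    (hQ : IsQuadAvgWith V q Q) (hQ' : IsQuadAvgWith V' q' Q')
    (hr : qRank (V ⊓ V') (fun x => q x - q' x) = r) :
    ‖inprod Q Q'‖ ≤ (p : ℝ) ^ (-(r : ℝ) / 2) := by
  obtain ⟨hq, φ, hφ, hQ⟩ := hQ
  obtain ⟨hq', φ', hφ', hQ'⟩ := hQ'
  simp only [omg_eq_stdAddChar] at hQ hQ'
  have hcard : 0 < Fintype.card (Vec p n) * #(subFinset V) * #(subFinset V') :=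
    Nat.mul_pos (Nat.mul_pos Fintype.card_pos (card_pos.2 ⟨0, mem_subFinset.2 V.zero_mem⟩))
      (card_pos.2 ⟨0, mem_subFinset.2 V'.zero_mem⟩)
  rw [inprod_eq_sum_filter_sub_mem (e := fun y v => q v + φ y v) (e' := fun y v => q' v + φ' y v)
    hQ hQ', norm_div, Complex.norm_natCast, div_le_iff₀ (Nat.cast_pos.2 hcard),
    ← card_filter_sub_mem_sum, Nat.cast_sum, mul_sum]
  refine (norm_sum_le _ _).trans (sum_le_sum fun y _ => (norm_sum_le _ _).trans ?_)
  push_cast [mul_sum]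
  refine sum_le_sum fun y' _ => ?_
  rw [mul_comm, ← hr]
  exact norm_sum_filter_sub_mem_le hq hq' (hφ y) (hφ' y') y y'
end

section
/- Let p be a prime and ω = e^{2πi/p}. Let W be a linear subspace of 𝔽_p^n of codimension d, let y ∈ W^⊥, and let φ : W → 𝔽_p be a linear function. Define g : 𝔽_p^n → ℂ by g(x) = ω^{φ(x−y)} when x ∈ y + W and g(x) = 0 otherwise. Then ‖g‖_{U^2}^* = p^{−d/4}. -/
open scoped BigOperators

/-! The Fourier transform of `g` is supported on the coset `{ξ : ξ|_W = -φ}` of `W^⊥`, which has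
`p^d` elements, and has constant modulus `|W|` there. On the Fourier side `⟨f, g⟩` becomes
`𝔼_ξ f̂(ξ) conj ĝ(ξ)` and `‖f‖_{U²}` becomes `‖f̂‖_4`, so Hölder's inequality on that coset gives
`|⟨f, g⟩| ≤ p^{-d/4} ‖f‖_{U²}`, with equality for `f = g`. -/

open Finset

section Character

variable {p : ℕ} [NeZero p]

lemma omg_eq_stdAddChar_s8 : omg p = ZMod.stdAddChar := by
  ext t
  rw [ZMod.stdAddChar_apply, ZMod.toCircle_apply, omg]

lemma omg_add (a b : ZMod p) : omg p (a + b) = omg p a * omg p b := by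
  rw [omg_eq_stdAddChar_s8, AddChar.map_add_eq_mul]

lemma omg_zero : omg p 0 = 1 := by
  rw [omg_eq_stdAddChar_s8, AddChar.map_zero_eq_one]

lemma star_omg (t : ZMod p) : star (omg p t) = omg p (-t) := by
  rw [omg_eq_stdAddChar_s8, AddChar.map_neg_eq_conj]
  rfl

lemma norm_omg (t : ZMod p) : ‖omg p t‖ = 1 := by
  rw [omg_eq_stdAddChar_s8, ZMod.stdAddChar_apply]
  exact Circle.norm_coe _

lemma sum_omg_dual_eq_ite {V : Type*} [AddCommGroup V] [Module (ZMod p) V] [Fintype V]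
    (ℓ : Module.Dual (ZMod p) V) :
    ∑ v, omg p (ℓ v) = if ℓ = 0 then (Fintype.card V : ℂ) else 0 := by
  have h := AddChar.sum_eq_ite (ZMod.stdAddChar.compAddMonoidHom ℓ.toAddMonoidHom)
  simp only [AddChar.compAddMonoidHom_apply, LinearMap.toAddMonoidHom_coe] at h
  rw [omg_eq_stdAddChar_s8, h]
  congr 1
  simp only [AddChar.eq_zero_iff, AddChar.compAddMonoidHom_apply, LinearMap.toAddMonoidHom_coe,
    LinearMap.ext_iff, LinearMap.zero_apply]
  exact propext <| forall_congr' fun v =>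
    (ZMod.injective_stdAddChar (N := p)).eq_iff' (AddChar.map_zero_eq_one _)

lemma sum_omg_dotProduct_eq_ite {n : ℕ} (v : Vec p n) :
    ∑ ξ : Vec p n, omg p (ξ ⬝ᵥ v) = if v = 0 then (p : ℂ) ^ n else 0 := by
  simp_rw [dotProduct_comm _ v]
  have h := sum_omg_dual_eq_ite (dotProductEquiv (ZMod p) (Fin n) v)
  simp only [dotProductEquiv_apply_apply, LinearEquiv.map_eq_zero_iff] at h
  simp [h, ZMod.card]

end Character

lemma rpow_quarter_pow_four {x : ℝ} (hx : 0 ≤ x) : (x ^ 4) ^ (1 / 4 : ℝ) = x := by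
  rw [show (1 / 4 : ℝ) = ((4 : ℕ) : ℝ)⁻¹ by norm_num]
  exact Real.pow_rpow_inv_natCast hx (by norm_num)

lemma sum_le_card_rpow_mul_sum_pow_four {ι : Type*} (s : Finset ι) {a : ι → ℝ}
    (ha : ∀ i ∈ s, 0 ≤ a i) :
    ∑ i ∈ s, a i ≤ (#s : ℝ) ^ (3 / 4 : ℝ) * (∑ i ∈ s, a i ^ 4) ^ (1 / 4 : ℝ) := by
  have h := Real.inner_le_Lp_mul_Lq_of_nonneg s
    (Real.holderConjugate_one_div (a := 3 / 4) (b := 1 / 4) (by norm_num) (by norm_num)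
      (by norm_num)) (f := fun _ => 1) (fun _ _ => zero_le_one) ha
  norm_num at h
  exact h

section Fourier

variable {p n : ℕ} [NeZero p]

noncomputable def vecFourier (f : Vec p n → ℂ) (ξ : Vec p n) : ℂ :=
  ∑ x, f x * omg p (ξ ⬝ᵥ x)

lemma vecFourier_const_mul (c : ℂ) (f : Vec p n → ℂ) (ξ : Vec p n) :
    vecFourier (c • f) ξ = c * vecFourier f ξ := by
  simp only [vecFourier, mul_sum, Pi.smul_apply, smul_eq_mul, mul_assoc]

theorem sum_vecFourier_mul_star (f g : Vec p n → ℂ) :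
    ∑ ξ, vecFourier f ξ * star (vecFourier g ξ) = (p : ℂ) ^ n * ∑ x, f x * star (g x) := by
  calc ∑ ξ, vecFourier f ξ * star (vecFourier g ξ)
      = ∑ x, ∑ u, f x * star (g u) * ∑ ξ : Vec p n, omg p (ξ ⬝ᵥ (x - u)) := by
        simp only [vecFourier, star_sum, sum_mul_sum]
        simp only [mul_sum]
        refine sum_comm.trans <| sum_congr rfl fun x _ => sum_comm.trans <|
          sum_congr rfl fun u _ => sum_congr rfl fun ξ _ => ?_
        rw [star_mul', star_omg, dotProduct_sub, sub_eq_add_neg, omg_add]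
        ring
    _ = ∑ x, (p : ℂ) ^ n * (f x * star (g x)) := by
        refine sum_congr rfl fun x _ => ?_
        simp only [sum_omg_dotProduct_eq_ite, sub_eq_zero, mul_ite, mul_zero, sum_ite_eq, mem_univ,
          if_true]
        ring
    _ = (p : ℂ) ^ n * ∑ x, f x * star (g x) := (mul_sum ..).symm

lemma inprod_eq_sum_vecFourier (f g : Vec p n → ℂ) :
    inprod f g = (∑ ξ, vecFourier f ξ * star (vecFourier g ξ)) / (p : ℂ) ^ (2 * n) := by
  have hp : (p : ℂ) ≠ 0 := Nat.cast_ne_zero.2 (NeZero.ne p)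
  rw [sum_vecFourier_mul_star, inprod, avgC, Fintype.card_fun, ZMod.card, Fintype.card_fin]
  push_cast
  field_simp
  ring

noncomputable def autocorr (f : Vec p n → ℂ) (a : Vec p n) : ℂ :=
  ∑ x, f x * star (f (x + a))

lemma sum_U2_summand_eq_sum_autocorr (f : Vec p n → ℂ) :
    ∑ t : Vec p n × Vec p n × Vec p n,
      f t.1 * star (f (t.1 + t.2.1)) * star (f (t.1 + t.2.2)) * f (t.1 + t.2.1 + t.2.2)
    = ∑ a, autocorr f a * star (autocorr f a) := by
  simp only [Fintype.sum_prod_type]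
  rw [sum_comm]
  refine sum_congr rfl fun a _ => ?_
  have inner : ∀ x, ∑ b, f x * star (f (x + a)) * star (f (x + b)) * f (x + a + b)
      = f x * star (f (x + a)) * ∑ u, star (f u) * f (u + a) := fun x => by
    rw [mul_sum, ← Equiv.sum_comp (Equiv.addLeft x)
      (fun u => f x * star (f (x + a)) * (star (f u) * f (u + a)))]
    refine sum_congr rfl fun b _ => ?_
    rw [Equiv.coe_addLeft, add_right_comm]
    ring
  simp only [inner, ← sum_mul, autocorr, star_sum, star_mul', star_star]

lemma vecFourier_autocorr (f : Vec p n → ℂ) (ξ : Vec p n) :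
    vecFourier (autocorr f) ξ = (‖vecFourier f (-ξ)‖ : ℂ) ^ 2 := by
  rw [← Complex.mul_conj', ← Complex.star_def]
  simp only [vecFourier, star_sum]
  rw [sum_mul_sum]
  simp only [autocorr, sum_mul]
  refine sum_comm.trans <| sum_congr rfl fun x _ => ?_
  refine Eq.trans ?_ (Equiv.sum_comp (Equiv.addLeft x) _)
  refine sum_congr rfl fun a _ => ?_
  have hx : omg p (-(ξ ⬝ᵥ x)) * omg p (ξ ⬝ᵥ x) = 1 := by rw [← omg_add, neg_add_cancel, omg_zero]
  simp only [Equiv.coe_addLeft, star_mul', star_omg, neg_dotProduct, neg_neg, dotProduct_add,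
    omg_add]
  linear_combination -(f x * star (f (x + a)) * omg p (ξ ⬝ᵥ a)) * hx

lemma sum_norm_vecFourier_pow_four (f : Vec p n → ℂ) :
    ∑ ξ, ((‖vecFourier f ξ‖ ^ 4 : ℝ) : ℂ) = (p : ℂ) ^ n * ∑ t : Vec p n × Vec p n × Vec p n,
      f t.1 * star (f (t.1 + t.2.1)) * star (f (t.1 + t.2.2)) * f (t.1 + t.2.1 + t.2.2) := by
  rw [sum_U2_summand_eq_sum_autocorr, ← sum_vecFourier_mul_star,
    ← Equiv.sum_comp (Equiv.neg _)]
  refine sum_congr rfl fun ξ _ => ?_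
  rw [vecFourier_autocorr, Equiv.neg_apply, star_pow, Complex.star_def, Complex.conj_ofReal]
  push_cast
  ring

theorem U2_eq_vecFourier (f : Vec p n → ℂ) :
    U2 f = (∑ ξ, ‖vecFourier f ξ‖ ^ 4) ^ (1 / 4 : ℝ) / p ^ n := by
  have hp : (p : ℂ) ≠ 0 := Nat.cast_ne_zero.2 (NeZero.ne p)
  have havg : avgC (fun t : Vec p n × Vec p n × Vec p n =>
      f t.1 * star (f (t.1 + t.2.1)) * star (f (t.1 + t.2.2)) * f (t.1 + t.2.1 + t.2.2))
      = (((∑ ξ, ‖vecFourier f ξ‖ ^ 4) / (p : ℝ) ^ (4 * n) : ℝ) : ℂ) := by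
    have h := sum_norm_vecFourier_pow_four f
    rw [avgC, Fintype.card_prod, Fintype.card_prod, Fintype.card_fun, ZMod.card, Fintype.card_fin]
    push_cast at h ⊢
    rw [h]
    field_simp
    ring
  rw [U2, havg, Complex.norm_real, Real.norm_of_nonneg (by positivity),
    Real.div_rpow (by positivity) (by positivity), mul_comm 4 n, pow_mul,
    rpow_quarter_pow_four (by positivity)]

lemma U2_smul (c : ℂ) (f : Vec p n → ℂ) : U2 (c • f) = ‖c‖ * U2 f := by
  simp only [U2_eq_vecFourier, vecFourier_const_mul, norm_mul, mul_pow, ← mul_sum]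
  rw [Real.mul_rpow (by positivity) (by positivity), rpow_quarter_pow_four (norm_nonneg c),
    mul_div_assoc]

lemma inprod_smul_left (c : ℂ) (f g : Vec p n → ℂ) : inprod (c • f) g = c * inprod f g := by
  simp only [inprod, avgC, Pi.smul_apply, smul_eq_mul, mul_assoc, ← mul_sum, mul_div_assoc]

theorem U2dual_eq_of_le_of_eq {g : Vec p n → ℂ} {K : ℝ} (hle : ∀ f, ‖inprod f g‖ ≤ K * U2 f)
    (hg : 0 < U2 g) (heq : ‖inprod g g‖ = K * U2 g) : U2dual g = K := by
  have hK : 0 ≤ K := nonneg_of_mul_nonneg_left (heq ▸ norm_nonneg _) hg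
  have hnorm : ‖(((U2 g)⁻¹ : ℝ) : ℂ)‖ = (U2 g)⁻¹ := by
    rw [Complex.norm_real, Real.norm_of_nonneg (inv_nonneg.2 hg.le)]
  refine IsGreatest.csSup_eq ⟨⟨(((U2 g)⁻¹ : ℝ) : ℂ) • g, ?_, ?_⟩, ?_⟩
  · rw [U2_smul, hnorm, inv_mul_cancel₀ hg.ne']
  · rw [inprod_smul_left, norm_mul, hnorm, heq, mul_comm K, ← mul_assoc, inv_mul_cancel₀ hg.ne',
      one_mul]
  · rintro r ⟨f, hf, rfl⟩
    exact (hle f).trans (mul_le_of_le_one_right hK hf)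

theorem U2dual_eq_of_norm_vecFourier_eq_on {g : Vec p n → ℂ} {S : Finset (Vec p n)} {M : ℝ}
    (hM : 0 < M) (hS : S.Nonempty) (hout : ∀ ξ ∉ S, vecFourier g ξ = 0)
    (hin : ∀ ξ ∈ S, ‖vecFourier g ξ‖ = M) :
    U2dual g = M * (#S : ℝ) ^ (3 / 4 : ℝ) / p ^ n := by
  have hp : (0 : ℝ) < p := Nat.cast_pos.2 (Nat.pos_of_neZero p)
  have hS0 : (0 : ℝ) < #S := Nat.cast_pos.2 hS.card_pos
  have sum_eq_sum_on : ∀ F : Vec p n → ℝ, (∀ ξ ∉ S, F ξ = 0) → ∑ ξ, F ξ = ∑ ξ ∈ S, F ξ :=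
    fun F hF => (sum_subset (subset_univ S) fun ξ _ hξ => hF ξ hξ).symm
  have hU2g : U2 g = (#S : ℝ) ^ (1 / 4 : ℝ) * M / p ^ n := by
    rw [U2_eq_vecFourier, sum_eq_sum_on (‖vecFourier g ·‖ ^ 4) fun ξ hξ => by simp [hout ξ hξ],
      sum_congr rfl fun ξ hξ => by rw [hin ξ hξ], sum_const, nsmul_eq_mul,
      Real.mul_rpow hS0.le (by positivity), rpow_quarter_pow_four hM.le]
  refine U2dual_eq_of_le_of_eq (fun f => ?_) (by rw [hU2g]; positivity) ?_
  · calc ‖inprod f g‖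
        ≤ (∑ ξ, ‖vecFourier f ξ‖ * ‖vecFourier g ξ‖) / p ^ (2 * n) := by
          rw [inprod_eq_sum_vecFourier, norm_div, norm_pow, Complex.norm_natCast]
          gcongr
          refine (norm_sum_le _ _).trans_eq (sum_congr rfl fun ξ _ => ?_)
          rw [norm_mul, norm_star]
      _ = M * (∑ ξ ∈ S, ‖vecFourier f ξ‖) / p ^ (2 * n) := by
          rw [sum_eq_sum_on (fun ξ => ‖vecFourier f ξ‖ * ‖vecFourier g ξ‖)
            fun ξ hξ => by simp [hout ξ hξ], mul_sum]
          exact congrArg (· / _) <| sum_congr rfl fun ξ hξ => by rw [hin ξ hξ, mul_comm]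
      _ ≤ M * ((#S : ℝ) ^ (3 / 4 : ℝ) * (∑ ξ, ‖vecFourier f ξ‖ ^ 4) ^ (1 / 4 : ℝ))
            / p ^ (2 * n) := by
          gcongr
          refine (sum_le_card_rpow_mul_sum_pow_four S (a := (‖vecFourier f ·‖))
            fun ξ _ => norm_nonneg _).trans ?_
          gcongr
          exact subset_univ S
      _ = M * (#S : ℝ) ^ (3 / 4 : ℝ) / p ^ n * U2 f := by
          rw [U2_eq_vecFourier, two_mul, pow_add]
          field_simp
  · have hinprod : inprod g g = ((#S * M ^ 2 / p ^ (2 * n) : ℝ) : ℂ) := by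
      simp only [inprod_eq_sum_vecFourier, Complex.star_def, Complex.mul_conj',
        ← Complex.ofReal_pow, ← Complex.ofReal_sum]
      rw [sum_eq_sum_on (‖vecFourier g ·‖ ^ 2) fun ξ hξ => by simp [hout ξ hξ],
        sum_congr rfl fun ξ hξ => by rw [hin ξ hξ], sum_const, nsmul_eq_mul]
      norm_num
    have hquarters : (#S : ℝ) ^ (3 / 4 : ℝ) * (#S : ℝ) ^ (1 / 4 : ℝ) = #S := by
      rw [← Real.rpow_add hS0]
      norm_num
    rw [hinprod, Complex.norm_real, Real.norm_of_nonneg (by positivity), hU2g, two_mul, pow_add]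
    linear_combination -(M ^ 2 / (p ^ n * p ^ n)) * hquarters

end Fourier

lemma card_filter_eq_pow_of_surjective {K V V' : Type*} [Field K] [Fintype K] [AddCommGroup V]
    [Module K V] [Fintype V] [AddCommGroup V'] [Module K V'] [DecidableEq V'] (L : V →ₗ[K] V')
    (hL : Function.Surjective L) (v' : V') :
    #{v | L v = v'} = Fintype.card K ^ (Module.finrank K V - Module.finrank K V') := by
  classical
  rw [AddMonoidHom.card_fiber_eq_of_mem_range (G := V) L (hL v') ⟨0, map_zero L⟩]
  have hker : #{v | L v = 0} = Fintype.card (LinearMap.ker L) := by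
    rw [← Fintype.card_subtype]
    exact Fintype.card_congr (Equiv.subtypeEquivRight fun v => LinearMap.mem_ker.symm)
  have hrank := LinearMap.finrank_range_add_finrank_ker L
  rw [LinearMap.range_eq_top.2 hL, finrank_top] at hrank
  rw [hker, Module.card_eq_pow_finrank (K := K) (V := LinearMap.ker L)]
  congr 1
  omega

section Coset

variable {p n : ℕ} (W : Submodule (ZMod p) (Vec p n))

noncomputable def dotProductRestrict : Vec p n →ₗ[ZMod p] Module.Dual (ZMod p) W :=
  W.dualRestrict ∘ₗ (dotProductEquiv (ZMod p) (Fin n)).toLinearMap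

lemma dotProductRestrict_apply (ξ : Vec p n) (w : W) : dotProductRestrict W ξ w = ξ ⬝ᵥ w := rfl

lemma dotProductRestrict_surjective [Fact p.Prime] : Function.Surjective (dotProductRestrict W) :=
  Subspace.dualRestrict_surjective.comp (LinearEquiv.surjective _)

open scoped Classical

variable [NeZero p] {y : Vec p n} {φ : W →ₗ[ZMod p] ZMod p} {g : Vec p n → ℂ}

lemma vecFourier_coset (hg : ∀ x, g x = if h : x - y ∈ W then omg p (φ ⟨x - y, h⟩) else 0)
    (ξ : Vec p n) :
    vecFourier g ξ = omg p (ξ ⬝ᵥ y) * ∑ w : W, omg p ((dotProductRestrict W ξ + φ) w) := by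
  -- substitute `x = y + v` and split the sum according to whether `v ∈ W`
  rw [vecFourier, ← Equiv.sum_comp ((Equiv.sumCompl (· ∈ W)).trans (Equiv.addLeft y)),
    Fintype.sum_sum_type, mul_sum]
  simp only [Equiv.trans_apply, Equiv.sumCompl_apply_inl, Equiv.sumCompl_apply_inr,
    Equiv.coe_addLeft, hg, add_sub_cancel_left]
  refine (add_eq_left.2 <| sum_eq_zero fun v _ => by rw [dif_neg v.2, zero_mul]).trans <|
    sum_congr rfl fun w _ => ?_
  rw [dif_pos w.2, LinearMap.add_apply, dotProductRestrict_apply, dotProduct_add, omg_add, omg_add]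
  ring

lemma vecFourier_coset_eq_zero
    (hg : ∀ x, g x = if h : x - y ∈ W then omg p (φ ⟨x - y, h⟩) else 0) {ξ : Vec p n}
    (hξ : dotProductRestrict W ξ ≠ -φ) : vecFourier g ξ = 0 := by
  rw [vecFourier_coset W hg, sum_omg_dual_eq_ite, if_neg (by rwa [add_eq_zero_iff_eq_neg]),
    mul_zero]

lemma norm_vecFourier_coset
    (hg : ∀ x, g x = if h : x - y ∈ W then omg p (φ ⟨x - y, h⟩) else 0) {ξ : Vec p n}
    (hξ : dotProductRestrict W ξ = -φ) : ‖vecFourier g ξ‖ = Fintype.card W := by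
  rw [vecFourier_coset W hg, sum_omg_dual_eq_ite, if_pos (add_eq_zero_iff_eq_neg.2 hξ), norm_mul,
    norm_omg, one_mul, Complex.norm_natCast]

end Coset

open scoped Classical in
theorem stmt8_general (p : ℕ) [Fact p.Prime] (n : ℕ)
    (W : Submodule (ZMod p) (Vec p n)) (d : ℕ)
    (hd : n - Module.finrank (ZMod p) W = d)
    (y : Vec p n)
    (φ : W →ₗ[ZMod p] ZMod p) (g : Vec p n → ℂ)
    (hg : ∀ x, g x = if h : x - y ∈ W then omg p (φ ⟨x - y, h⟩) else 0) :
    U2dual g = (p : ℝ) ^ (-(d : ℝ) / 4) := by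
  set m := Module.finrank (ZMod p) W
  have hp : (0 : ℝ) < p := Nat.cast_pos.2 (Fact.out : p.Prime).pos
  have hmn : (n : ℝ) = m + d := by
    have := (Submodule.finrank_le W).trans_eq (Module.finrank_fin_fun (ZMod p))
    exact_mod_cast (by omega : n = m + d)
  have hS : #{ξ | dotProductRestrict W ξ = -φ} = p ^ d := by
    rw [card_filter_eq_pow_of_surjective _ (dotProductRestrict_surjective W), ZMod.card,
      Subspace.dual_finrank_eq, Module.finrank_fin_fun, hd]
  have hW : Fintype.card W = p ^ m := by
    rw [Module.card_eq_pow_finrank (K := ZMod p) (V := W), ZMod.card]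
  rw [U2dual_eq_of_norm_vecFourier_eq_on (M := (p : ℝ) ^ m) (by positivity)
    (card_pos.1 (hS ▸ pow_pos (Fact.out : p.Prime).pos d))
    (fun ξ hξ => vecFourier_coset_eq_zero W hg (by simpa using hξ))
    (fun ξ hξ => by rw [norm_vecFourier_coset W hg (by simpa using hξ), hW, Nat.cast_pow]), hS]
  push_cast
  simp only [← Real.rpow_natCast, ← Real.rpow_mul hp.le, ← Real.rpow_add hp, ← Real.rpow_sub hp]
  congr 1
  rw [hmn]
  ring

open scoped Classical in
/-- Lemma 4.4. If `W ≤ 𝔽_p^n` has codimension `d`, `y ∈ W^⊥`, `φ` is a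
linear function on `W`, and `g = ω^{φ(x-y)}·1_{y+W}`, then `‖g‖_{U²}^* = p^{-d/4}`. -/
theorem stmt8 (p : ℕ) [Fact p.Prime] (n : ℕ)
    (W : Submodule (ZMod p) (Vec p n)) (d : ℕ)
    (hd : n - Module.finrank (ZMod p) W = d)
    (y : Vec p n) (hy : ∀ x ∈ W, (∑ j, y j * x j) = 0)
    (φ : W →ₗ[ZMod p] ZMod p) (g : Vec p n → ℂ)
    (hg : ∀ x, g x = if h : x - y ∈ W then omg p (φ ⟨x - y, h⟩) else 0) :
    U2dual g = (p : ℝ) ^ (-(d : ℝ) / 4) :=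
  stmt8_general p n W d hd y φ g hg
end
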